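/- arXiv:1101.2679 — 2 statements merged into one kernel-verified Lean document; each statement's English description precedes it below -/
import Mathlib

section
/- Let x₀ = (a+b)/2, σ > 0, μ > 0, and set t_n = n(b−x₀)/μ for n ∈ ℕ, x₁ = x₀ + (b−x₀)/4, x₃ = x₀ + 3(b−x₀)/4, A = [x₀, x₀ + (b−x₀)/2), J = (−(b−x₀)/(4σ), (b−x₀)/(4σ)), and τ_J = inf{t > 0 : B_t ∉ J}. Let X^x denote the L^{σ,μ}-diffusion in (a,b) with jump boundary and jump distribution δ_{x₀} started at x, built from the driving Brownian motion (B_t). Then for every n ∈ ℕ: P(X^{x₁}_{t_n} ∈ A and τ_J > t_n) = P(τ_J > t_n), and P(X^{x₃}_{t_n} ∈ A and τ_J > t_n) = 0. -/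
open MeasureTheory ProbabilityTheory Set Filter

open scoped Classical in
/-- A standard one-dimensional Brownian motion started at `0`: continuous paths,
`B 0 = 0`, Gaussian increments `B t - B s ~ N(0, t-s)` and independent increments. -/
structure IsStandardBM {Ω : Type} [MeasurableSpace Ω] (P : Measure Ω) (B : ℝ → Ω → ℝ) : Prop where
  isProb : IsProbabilityMeasure P
  start : ∀ ω, B 0 ω = 0
  meas : ∀ t, Measurable (B t)
  cont : ∀ ω, Continuous fun t => B t ω
  gauss : ∀ s t : ℝ, 0 ≤ s → s ≤ t →
    P.map (fun ω => B t ω - B s ω) = gaussianReal 0 (Real.toNNReal (t - s))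
  indep : ∀ (n : ℕ) (τ : ℕ → ℝ), Monotone τ → 0 ≤ τ 0 →
    iIndepFun
      (fun i : Fin n => fun ω => B (τ (i.1 + 1)) ω - B (τ i.1) ω) P

/-- First exit time after 0 of the drifted Brownian motion `x + σ B_t + μ t` from `(c,d)`. -/
noncomputable def exitTime {Ω : Type} (c d σ μ x : ℝ) (B : ℝ → Ω → ℝ) (ω : Ω) : ℝ :=
  sInf {t : ℝ | 0 < t ∧ x + σ * B t ω + μ * t ∉ Set.Ioo c d}

/-- The successive jump times of the `L^{σ,μ}`-diffusion in `(a,b)` with jump boundary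
and jump distribution `δ_{(a+b)/2}`, started at `x` and driven by `B`. -/
noncomputable def jumpTimes {Ω : Type} (a b σ μ x : ℝ) (B : ℝ → Ω → ℝ) (ω : Ω) : ℕ → ℝ
  | 0 => sInf {t : ℝ | 0 < t ∧ x + σ * B t ω + μ * t ∉ Set.Ioo a b}
  | n + 1 =>
      sInf {t : ℝ | jumpTimes a b σ μ x B ω n < t ∧
        (a + b) / 2 + σ * (B t ω - B (jumpTimes a b σ μ x B ω n) ω) +
          μ * (t - jumpTimes a b σ μ x B ω n) ∉ Set.Ioo a b}

open scoped Classical in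
/-- The `L^{σ,μ}`-diffusion in `(a,b)` with jump boundary and jump distribution
`δ_{(a+b)/2}`, started at `x` and driven by the Brownian motion `B`. -/
noncomputable def jumpProcess {Ω : Type} (a b σ μ x : ℝ) (B : ℝ → Ω → ℝ) (t : ℝ) (ω : Ω) : ℝ :=
  (if t < jumpTimes a b σ μ x B ω 0 then x + σ * B t ω + μ * t else 0) +
  ∑' i : ℕ,
    (if jumpTimes a b σ μ x B ω i ≤ t ∧ t < jumpTimes a b σ μ x B ω (i + 1) then
      (a + b) / 2 + σ * (B t ω - B (jumpTimes a b σ μ x B ω i) ω) +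
        μ * (t - jumpTimes a b σ μ x B ω i)
    else 0)

/-- Total variation distance between two measures on `ℝ`. -/
noncomputable def tvDist (μ ν : Measure ℝ) : ℝ :=
  ⨆ s : {s : Set ℝ // MeasurableSet s}, |(μ s.1).toReal - (ν s.1).toReal|

/-- `π` is an invariant probability distribution for the jump-boundary diffusion. -/
def IsInvariantDist {Ω : Type} [MeasurableSpace Ω] (P : Measure Ω) (B : ℝ → Ω → ℝ)
    (a b σ μ : ℝ) (π : Measure ℝ) : Prop :=
  IsProbabilityMeasure π ∧ π (Set.Ioo a b)ᶜ = 0 ∧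
    ∀ t : ℝ, 0 ≤ t → ∀ A : Set ℝ, MeasurableSet A →
      ∫ x, (P {ω | jumpProcess a b σ μ x B t ω ∈ A}).toReal ∂π = (π A).toReal


/-!
Write `H = b - x₀` and start at `x₀ + d` with `H/4 ≤ d ≤ 3H/4`. On the event `τ_J > t_n`
the noise satisfies `|σ B_t| < H/4` up to `t_n`, so the diffusion is carried by its drift:
it never reaches `a`, and it reaches `b` exactly when `σ B_t + μ t = (k+1) H - d`, each jump
lowering the position by `H`. Since `μ t_n = n H`, exactly `n` jumps precede `t_n`, whence
`X_{t_n} = x₀ + d + σ B_{t_n}`: inside `A` for `d = H/4`, above it for `d = 3H/4`.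
The jump times are infima (`sInf ∅ = 0`), so one also needs that almost surely the path
`σ B_t + μ t` oscillates by `b - a` after every time; this follows from the independence of
the unit increments of `B`.
-/

noncomputable def firstExitAfter (a b : ℝ) (g : ℝ → ℝ) (s : ℝ) : ℝ :=
  sInf {t | s < t ∧ g t ∉ Ioo a b}

section FirstExit

variable {a b s : ℝ} {g : ℝ → ℝ}

lemma lt_firstExitAfter (hg : Continuous g) {u : ℝ} (hsu : s ≤ u)
    (hin : ∀ t ∈ Icc s u, g t ∈ Ioo a b) (hne : {t | s < t ∧ g t ∉ Ioo a b}.Nonempty) :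
    u < firstExitAfter a b g s := by
  obtain ⟨ε, hε, hball⟩ := Metric.eventually_nhds_iff.mp
    (hg.continuousAt.eventually_mem (isOpen_Ioo.mem_nhds (hin u ⟨hsu, le_rfl⟩)))
  have hbound : ∀ t ∈ {t | s < t ∧ g t ∉ Ioo a b}, u + ε / 2 ≤ t := by
    rintro t ⟨hst, hout⟩
    by_contra! ht
    rcases le_or_gt t u with htu | hut
    · exact hout (hin t ⟨hst.le, htu⟩)
    · exact hout (hball (by rw [Real.dist_eq, abs_lt]; constructor <;> linarith))
  have := le_csInf hne hbound
  unfold firstExitAfter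
  linarith

lemma firstExitAfter_spec (hg : Continuous g) (hab : a < b) (hs : g s ∈ Ioo a b)
    (hne : {t | s < t ∧ g t ∉ Ioo a b}.Nonempty) :
    s < firstExitAfter a b g s ∧
      (g (firstExitAfter a b g s) = a ∨ g (firstExitAfter a b g s) = b) := by
  set τ := firstExitAfter a b g s
  have hsτ : s < τ :=
    lt_firstExitAfter hg le_rfl (fun t ht => by rwa [← ht.1.antisymm ht.2]) hne
  have hbefore : ∀ t ∈ Ico s τ, g t ∈ Ioo a b := by
    rintro t ⟨hst, htτ⟩
    rcases hst.eq_or_lt with rfl | hst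
    · exact hs
    · by_contra hout
      exact (csInf_le (s := {t | s < t ∧ g t ∉ Ioo a b}) ⟨s, fun t ht => ht.1.le⟩
        ⟨hst, hout⟩).not_gt htτ
  have hout : g τ ∉ Ioo a b := fun hin =>
    (lt_firstExitAfter hg hsτ.le (fun t ht => (ht.2.eq_or_lt).elim (fun h => h ▸ hin)
      (fun h => hbefore t ⟨ht.1, h⟩)) hne).false
  have hcl : g τ ∈ Icc a b := by
    rw [← closure_Ioo hab.ne]
    exact map_mem_closure hg (by rw [closure_Ico hsτ.ne]; exact right_mem_Icc.mpr hsτ.le) hbefore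
  refine ⟨hsτ, ?_⟩
  by_contra! h
  exact hout ⟨hcl.1.lt_of_ne' h.1, hcl.2.lt_of_ne h.2⟩

end FirstExit

section JumpTimes

variable {Ω : Type} {a b σ μ x : ℝ} {B : ℝ → Ω → ℝ} {ω : Ω}

def restartedPath (σ μ : ℝ) (B : ℝ → Ω → ℝ) (ω : Ω) (y s t : ℝ) : ℝ :=
  y + σ * (B t ω - B s ω) + μ * (t - s)

lemma continuous_restartedPath (hB : Continuous fun t => B t ω) (y s : ℝ) :
    Continuous (restartedPath σ μ B ω y s) := by
  unfold restartedPath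
  fun_prop

lemma jumpTimes_zero_eq (h0 : B 0 ω = 0) :
    jumpTimes a b σ μ x B ω 0 = firstExitAfter a b (restartedPath σ μ B ω x 0) 0 := by
  simp only [jumpTimes, firstExitAfter, restartedPath, h0, sub_zero]

lemma jumpTimes_succ_eq (k : ℕ) :
    jumpTimes a b σ μ x B ω (k + 1) = firstExitAfter a b
      (restartedPath σ μ B ω ((a + b) / 2) (jumpTimes a b σ μ x B ω k))
      (jumpTimes a b σ μ x B ω k) := rfl

lemma exists_restartedPath_notMem
    (hexit : ∀ s ≥ 0, ∃ t > s, b - a ≤ |σ * (B t ω - B s ω) + μ * (t - s)|)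
    {y s : ℝ} (hy : y ∈ Ioo a b) (hs : 0 ≤ s) :
    {t | s < t ∧ restartedPath σ μ B ω y s t ∉ Ioo a b}.Nonempty := by
  obtain ⟨t, hst, hlarge⟩ := hexit s hs
  refine ⟨t, hst, fun hin => ?_⟩
  simp only [restartedPath, mem_Ioo] at hin hy
  rcases abs_cases (σ * (B t ω - B s ω) + μ * (t - s)) with ⟨h, -⟩ | ⟨h, -⟩ <;> linarith

lemma jumpTimes_pos_strictMono (hB : Continuous fun t => B t ω) (h0 : B 0 ω = 0)
    (hx : x ∈ Ioo a b)
    (hexit : ∀ s ≥ 0, ∃ t > s, b - a ≤ |σ * (B t ω - B s ω) + μ * (t - s)|) :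
    0 < jumpTimes a b σ μ x B ω 0 ∧ StrictMono (jumpTimes a b σ μ x B ω) := by
  have hab : a < b := hx.1.trans hx.2
  have hpos : 0 < jumpTimes a b σ μ x B ω 0 := by
    rw [jumpTimes_zero_eq h0]
    refine (firstExitAfter_spec (continuous_restartedPath hB x 0) hab ?_
      (exists_restartedPath_notMem hexit hx le_rfl)).1
    simpa [restartedPath] using hx
  have hstep : ∀ k, 0 ≤ jumpTimes a b σ μ x B ω k →
      jumpTimes a b σ μ x B ω k < jumpTimes a b σ μ x B ω (k + 1) := fun k hk => by
    have hx₀ : (a + b) / 2 ∈ Ioo a b := ⟨by linarith, by linarith⟩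
    rw [jumpTimes_succ_eq]
    refine (firstExitAfter_spec (continuous_restartedPath hB _ _) hab ?_
      (exists_restartedPath_notMem hexit hx₀ hk)).1
    simpa [restartedPath] using hx₀
  have hall : ∀ k, 0 < jumpTimes a b σ μ x B ω k := by
    intro k
    induction k with
    | zero => exact hpos
    | succ k ih => exact ih.trans (hstep k ih.le)
  exact ⟨hpos, strictMono_nat_of_lt_succ fun k => hstep k (hall k).le⟩

lemma jumpProcess_of_lt_jumpTimes_zero (hT : Monotone (jumpTimes a b σ μ x B ω)) {t : ℝ}
    (ht : t < jumpTimes a b σ μ x B ω 0) :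
    jumpProcess a b σ μ x B t ω = x + σ * B t ω + μ * t := by
  have hinactive :
      ∀ i, ¬(jumpTimes a b σ μ x B ω i ≤ t ∧ t < jumpTimes a b σ μ x B ω (i + 1)) :=
    fun i h => (h.1.trans_lt ht).not_ge (hT (Nat.zero_le i))
  simp only [jumpProcess, if_pos ht, hinactive, if_false, tsum_zero, add_zero]

lemma jumpProcess_of_mem_Ico (hT : Monotone (jumpTimes a b σ μ x B ω)) {t : ℝ} {k : ℕ}
    (ht : t ∈ Ico (jumpTimes a b σ μ x B ω k) (jumpTimes a b σ μ x B ω (k + 1))) :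
    jumpProcess a b σ μ x B t ω =
      restartedPath σ μ B ω ((a + b) / 2) (jumpTimes a b σ μ x B ω k) t := by
  have hstarted : ¬t < jumpTimes a b σ μ x B ω 0 := (hT (Nat.zero_le k)).trans ht.1 |>.not_gt
  rw [jumpProcess, if_neg hstarted, zero_add, tsum_eq_single k, if_pos (show _ ∧ _ from ht),
    restartedPath]
  intro i hik
  refine if_neg fun hi => ?_
  rcases hik.lt_or_gt with h | h
  · exact (hT (Nat.succ_le_of_lt h)).trans ht.1 |>.not_gt hi.2
  · exact (hT (Nat.succ_le_of_lt h)).trans_lt' ht.2 |>.not_ge hi.1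

end JumpTimes

section Confined

variable {Ω : Type} {a b σ μ H d : ℝ} {B : ℝ → Ω → ℝ} {ω : Ω} {n : ℕ}

lemma firstExitAfter_restartedPath_of_confined (hB : Continuous fun t => B t ω) (hμ : 0 < μ)
    {δ T s y : ℝ} (hconf : ∀ t ∈ Icc 0 T, |σ * B t ω| < δ) (hs : s ∈ Icc 0 T)
    (hay : a + 2 * δ ≤ y) (hyb : y < b) (hT : σ * B s ω + μ * s + (b - y) + δ ≤ μ * T)
    (hne : {t | s < t ∧ restartedPath σ μ B ω y s t ∉ Ioo a b}.Nonempty) :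
    firstExitAfter a b (restartedPath σ μ B ω y s) s ≤ T ∧
      σ * B (firstExitAfter a b (restartedPath σ μ B ω y s) s) ω +
        μ * firstExitAfter a b (restartedPath σ μ B ω y s) s =
          σ * B s ω + μ * s + (b - y) := by
  set τ := firstExitAfter a b (restartedPath σ μ B ω y s) s
  have hBs := abs_lt.mp (hconf s hs)
  have hy : y ∈ Ioo a b := ⟨by linarith, hyb⟩
  obtain ⟨hsτ, hhit⟩ := firstExitAfter_spec (continuous_restartedPath hB y s)
    (hy.1.trans hy.2) (by simpa [restartedPath] using hy) hne
  -- by time `tb` the drift alone has carried the path past `b`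
  set tb := (σ * B s ω + μ * s + (b - y) + δ) / μ
  have hμtb : μ * tb = σ * B s ω + μ * s + (b - y) + δ := mul_div_cancel₀ _ hμ.ne'
  have htbT : tb ≤ T := le_of_mul_le_mul_left (hμtb ▸ hT) hμ
  have hstb : s < tb := lt_of_mul_lt_mul_left (by rw [hμtb]; linarith) hμ.le
  have hτtb : τ ≤ tb := by
    refine csInf_le ⟨s, fun t ht => ht.1.le⟩ ⟨hstb, fun hin => ?_⟩
    have hBtb := abs_lt.mp (hconf tb ⟨hs.1.trans hstb.le, htbT⟩)
    have := hin.2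
    simp only [restartedPath] at this
    linarith
  have hBτ := abs_lt.mp (hconf τ ⟨hs.1.trans hsτ.le, hτtb.trans htbT⟩)
  have hμτ : μ * s < μ * τ := mul_lt_mul_of_pos_left hsτ hμ
  refine ⟨hτtb.trans htbT, ?_⟩
  rcases hhit with hτ | hτ <;> simp only [restartedPath] at hτ <;> linarith

lemma jumpTimes_of_confined (hB : Continuous fun t => B t ω) (h0 : B 0 ω = 0) (hμ : 0 < μ)
    (hH : b - (a + b) / 2 = H) (hd : H / 4 ≤ d) (hd' : d ≤ 3 * H / 4)
    (hconf : ∀ t ∈ Icc 0 (n * H / μ), |σ * B t ω| < H / 4)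
    (hexit : ∀ s ≥ 0, ∃ t > s, b - a ≤ |σ * (B t ω - B s ω) + μ * (t - s)|) :
    ∀ k < n, jumpTimes a b σ μ ((a + b) / 2 + d) B ω k ≤ n * H / μ ∧
      σ * B (jumpTimes a b σ μ ((a + b) / 2 + d) B ω k) ω +
        μ * jumpTimes a b σ μ ((a + b) / 2 + d) B ω k = (k + 1) * H - d := by
  have htn : 0 ≤ (n : ℝ) * H / μ := div_nonneg (mul_nonneg n.cast_nonneg (by linarith)) hμ.le
  have hH0 : 0 < H := by simpa [h0] using hconf 0 ⟨le_rfl, htn⟩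
  have hμtn : μ * (n * H / μ) = n * H := mul_div_cancel₀ _ hμ.ne'
  have hx : (a + b) / 2 + d ∈ Ioo a b := ⟨by linarith, by linarith⟩
  have hx₀ : (a + b) / 2 ∈ Ioo a b := ⟨by linarith, by linarith⟩
  have hpos := jumpTimes_pos_strictMono hB h0 hx hexit
  intro k
  induction k with
  | zero =>
    intro hn
    have hn1 : (1 : ℝ) ≤ n := by exact_mod_cast hn
    rw [jumpTimes_zero_eq h0]
    obtain ⟨hle, heq⟩ := firstExitAfter_restartedPath_of_confined hB hμ hconf ⟨le_rfl, htn⟩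
      (by linarith) hx.2 (by rw [h0]; nlinarith) (exists_restartedPath_notMem hexit hx le_rfl)
    refine ⟨hle, ?_⟩
    rw [heq, h0]
    push_cast
    linarith
  | succ k ih =>
    intro hk
    obtain ⟨hle, heq⟩ := ih (by omega)
    have hk2 : (k : ℝ) + 2 ≤ n := by exact_mod_cast hk
    have hTk : 0 ≤ jumpTimes a b σ μ ((a + b) / 2 + d) B ω k :=
      (hpos.1.trans_le (hpos.2.monotone (Nat.zero_le k))).le
    rw [jumpTimes_succ_eq]
    obtain ⟨hle', heq'⟩ := firstExitAfter_restartedPath_of_confined hB hμ hconf ⟨hTk, hle⟩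
      (by linarith) hx₀.2 (by rw [heq]; nlinarith) (exists_restartedPath_notMem hexit hx₀ hTk)
    refine ⟨hle', ?_⟩
    rw [heq', heq]
    push_cast
    linarith

theorem jumpProcess_eq_of_confined (hB : Continuous fun t => B t ω) (h0 : B 0 ω = 0)
    (hμ : 0 < μ) (hH : b - (a + b) / 2 = H) (hd : H / 4 ≤ d) (hd' : d ≤ 3 * H / 4)
    (hconf : ∀ t ∈ Icc 0 (n * H / μ), |σ * B t ω| < H / 4)
    (hexit : ∀ s ≥ 0, ∃ t > s, b - a ≤ |σ * (B t ω - B s ω) + μ * (t - s)|) :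
    jumpProcess a b σ μ ((a + b) / 2 + d) B (n * H / μ) ω =
      (a + b) / 2 + d + σ * B (n * H / μ) ω := by
  have htn : 0 ≤ (n : ℝ) * H / μ := div_nonneg (mul_nonneg n.cast_nonneg (by linarith)) hμ.le
  have hH0 : 0 < H := by simpa [h0] using hconf 0 ⟨le_rfl, htn⟩
  have hx₀ : (a + b) / 2 ∈ Ioo a b := ⟨by linarith, by linarith⟩
  obtain ⟨hT0, hT⟩ := jumpTimes_pos_strictMono hB h0 (x := (a + b) / 2 + d)
    ⟨by linarith, by linarith⟩ hexit
  cases n with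
  | zero =>
    rw [jumpProcess_of_lt_jumpTimes_zero hT.monotone (by simpa using hT0)]
    simp
  | succ m =>
    set T := jumpTimes a b σ μ ((a + b) / 2 + d) B ω
    set tn := ((m + 1 : ℕ) : ℝ) * H / μ
    have hμtn : μ * tn = (m + 1) * H := by simp only [tn]; push_cast; field_simp
    obtain ⟨hle, hTm⟩ := jumpTimes_of_confined hB h0 hμ hH hd hd' hconf hexit m m.lt_succ_self
    have hTm0 : 0 ≤ T m := (hT0.trans_le (hT.monotone m.zero_le)).le
    have hBTm := abs_lt.mp (hconf (T m) ⟨hTm0, hle⟩)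
    have hlt : T m < tn := lt_of_mul_lt_mul_left (by linarith) hμ.le
    -- after its `m`-th jump the process stays in `(a, b)` up to time `tn`
    have hgt : tn < T (m + 1) := by
      refine lt_firstExitAfter (continuous_restartedPath hB _ _) hlt.le (fun t ht => ?_)
        (exists_restartedPath_notMem hexit hx₀ hTm0)
      have hBt := abs_lt.mp (hconf t ⟨hTm0.trans ht.1, ht.2⟩)
      have h1 : μ * T m ≤ μ * t := mul_le_mul_of_nonneg_left ht.1 hμ.le
      have h2 : μ * t ≤ μ * tn := mul_le_mul_of_nonneg_left ht.2 hμ.le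
      simp only [restartedPath, mem_Ioo]
      constructor <;> linarith
    rw [jumpProcess_of_mem_Ico hT.monotone ⟨hlt.le, hgt⟩, restartedPath]
    linear_combination hμtn - hTm

end Confined

lemma gaussianReal_Iio_lt_one (m : ℝ) {v : NNReal} (hv : v ≠ 0) (r : ℝ) :
    gaussianReal m v (Iio r) < 1 := by
  have hpos : gaussianReal m v (Ici r) ≠ 0 := fun h => by
    simpa [Real.volume_Ici] using gaussianReal_absolutelyContinuous' m hv h
  rw [← compl_Ici, prob_compl_eq_one_sub measurableSet_Ici]
  exact ENNReal.sub_lt_self ENNReal.one_ne_top one_ne_zero hpos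

namespace IsStandardBM

variable {Ω : Type} [MeasurableSpace Ω] {P : Measure Ω} {B : ℝ → Ω → ℝ}

lemma measure_forall_increment_mem_eq_zero (hB : IsStandardBM P B) {S : Set ℝ}
    (hS : MeasurableSet S) (hlt : gaussianReal 0 1 S < 1) (m : ℕ) :
    P {ω | ∀ j : ℕ, B (m + j + 1) ω - B (m + j) ω ∈ S} = 0 := by
  have := hB.isProb
  set inc : ℕ → Ω → ℝ := fun j ω => B (m + (j + 1 : ℕ)) ω - B (m + j) ω
  have hlaw : ∀ j, P (inc j ⁻¹' S) = gaussianReal 0 1 S := by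
    intro j
    have hg := hB.gauss (m + j) (m + (j + 1 : ℕ)) (by positivity) (by push_cast; linarith)
    have hmeas : Measurable (inc j) := (hB.meas _).sub (hB.meas _)
    rw [← Measure.map_apply hmeas hS, hg]
    norm_num
  -- `K` independent unit increments all land in `S` with probability `(N(0,1) S) ^ K`
  have hpow : ∀ K : ℕ, P {ω | ∀ j : ℕ, B (m + j + 1) ω - B (m + j) ω ∈ S} ≤
      gaussianReal 0 1 S ^ K := by
    intro K
    have hind : iIndepFun (fun i : Fin K => inc i) P :=
      hB.indep K (fun k : ℕ => (m : ℝ) + k)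
        (fun i j hij => add_le_add_right (Nat.cast_le.mpr hij) _) (by positivity)
    calc P {ω | ∀ j : ℕ, B (m + j + 1) ω - B (m + j) ω ∈ S}
        ≤ P (⋂ i ∈ (Finset.univ : Finset (Fin K)), inc i ⁻¹' S) :=
          measure_mono fun ω hω => by simpa [inc, add_assoc] using fun i : Fin K => hω i
      _ = ∏ i : Fin K, P (inc i ⁻¹' S) := hind.measure_inter_preimage_eq_mul _ fun _ _ => hS
      _ = gaussianReal 0 1 S ^ K := by simp [hlaw]
  exact le_antisymm
    (ge_of_tendsto' (ENNReal.tendsto_pow_atTop_nhds_zero_of_lt_one hlt) hpow) bot_le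

lemma ae_exists_large_increment (hB : IsStandardBM P B) {σ : ℝ} (hσ : σ ≠ 0) (μ C : ℝ) :
    ∀ᵐ ω ∂P, ∀ s, ∃ t > s, C ≤ |σ * (B t ω - B s ω) + μ * (t - s)| := by
  set S : Set ℝ := {z | |σ * z + μ| < 2 * C}
  have hS : MeasurableSet S := measurableSet_lt (by fun_prop) measurable_const
  have hSlt : gaussianReal 0 1 S < 1 := by
    refine (measure_mono fun z (hz : |σ * z + μ| < 2 * C) => ?_).trans_lt
      (gaussianReal_Iio_lt_one 0 one_ne_zero ((2 * C + |μ|) / |σ|))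
    rw [mem_Iio, lt_div_iff₀ (abs_pos.mpr hσ)]
    have h1 : |σ * z| ≤ |σ * z + μ| + |μ| := by
      simpa using abs_sub (σ * z + μ) μ
    calc z * |σ| ≤ |z| * |σ| := mul_le_mul_of_nonneg_right (le_abs_self z) (abs_nonneg σ)
      _ = |σ * z| := by rw [abs_mul, mul_comm]
      _ < 2 * C + |μ| := by linarith
  have hnot : ∀ᵐ ω ∂P, ∀ m : ℕ, ∃ j : ℕ, B (m + j + 1) ω - B (m + j) ω ∉ S := by
    refine ae_all_iff.mpr fun m => ?_
    filter_upwards [measure_eq_zero_iff_ae_notMem.mp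
      (hB.measure_forall_increment_mem_eq_zero hS hSlt m)] with ω hω
    simpa using hω
  filter_upwards [hnot] with ω hω s
  obtain ⟨m, hm⟩ := exists_nat_gt s
  obtain ⟨j, hj⟩ := hω m
  -- two consecutive grid points after `s` cannot both be within `C` of the value at `s`
  by_contra! hsmall
  have h1 := hsmall (m + j) (by linarith [(j.cast_nonneg : (0 : ℝ) ≤ j)])
  have h2 := hsmall (m + j + 1) (by linarith [(j.cast_nonneg : (0 : ℝ) ≤ j)])
  apply hj
  show |σ * (B (m + j + 1) ω - B (m + j) ω) + μ| < 2 * C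
  calc |σ * (B (m + j + 1) ω - B (m + j) ω) + μ|
      = |(σ * (B (m + j + 1) ω - B s ω) + μ * (m + j + 1 - s)) -
          (σ * (B (m + j) ω - B s ω) + μ * (m + j - s))| := by ring_nf
    _ ≤ _ := abs_sub _ _
    _ < 2 * C := by linarith

end IsStandardBM

lemma abs_lt_of_lt_exitTime {Ω : Type} {B : ℝ → Ω → ℝ} {ω : Ω} (h0 : B 0 ω = 0)
    {r T t : ℝ} (hr : 0 < r) (hT : T < exitTime (-r) r 1 0 0 B ω) (ht : t ∈ Icc 0 T) :
    |B t ω| < r := by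
  rcases ht.1.eq_or_lt with rfl | ht0
  · simpa [h0] using hr
  · by_contra! hle
    have hout : 0 + 1 * B t ω + 0 * t ∉ Ioo (-r) r := fun h =>
      hle.not_gt (abs_lt.mpr (by simpa using h))
    exact ((csInf_le (s := {u | 0 < u ∧ 0 + 1 * B u ω + 0 * u ∉ Ioo (-r) r})
      ⟨0, fun u hu => hu.1.le⟩ ⟨ht0, hout⟩).trans ht.2).not_gt hT

/-- With `x₀ = (a+b)/2`, `t_n = n(b-x₀)/μ`, `x₁ = x₀ + (b-x₀)/4`,
`x₃ = x₀ + 3(b-x₀)/4`, `A = [x₀, x₀+(b-x₀)/2)` and `τ_J` the exit time of the driving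
Brownian motion from `J = (-(b-x₀)/(4σ), (b-x₀)/(4σ))`:
`P(X^{x₁}_{t_n} ∈ A, τ_J > t_n) = P(τ_J > t_n)` and `P(X^{x₃}_{t_n} ∈ A, τ_J > t_n) = 0`
for every `n`. -/
theorem jump_process_on_exit_event {Ω : Type} [MeasurableSpace Ω] (P : Measure Ω)
    (B : ℝ → Ω → ℝ) (hB : IsStandardBM P B) (a b σ μ : ℝ) (hab : a < b)
    (hσ : 0 < σ) (hμ : 0 < μ) :
    ∀ n : ℕ,
      (P {ω | jumpProcess a b σ μ ((a + b) / 2 + (b - (a + b) / 2) / 4) B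
            ((n : ℝ) * (b - (a + b) / 2) / μ) ω ∈
          Set.Ico ((a + b) / 2) ((a + b) / 2 + (b - (a + b) / 2) / 2) ∧
          (n : ℝ) * (b - (a + b) / 2) / μ <
            exitTime (-((b - (a + b) / 2) / (4 * σ))) ((b - (a + b) / 2) / (4 * σ))
              1 0 0 B ω} =
        P {ω | (n : ℝ) * (b - (a + b) / 2) / μ <
            exitTime (-((b - (a + b) / 2) / (4 * σ))) ((b - (a + b) / 2) / (4 * σ))
              1 0 0 B ω}) ∧
      (P {ω | jumpProcess a b σ μ ((a + b) / 2 + 3 * (b - (a + b) / 2) / 4) B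
            ((n : ℝ) * (b - (a + b) / 2) / μ) ω ∈
          Set.Ico ((a + b) / 2) ((a + b) / 2 + (b - (a + b) / 2) / 2) ∧
          (n : ℝ) * (b - (a + b) / 2) / μ <
            exitTime (-((b - (a + b) / 2) / (4 * σ))) ((b - (a + b) / 2) / (4 * σ))
              1 0 0 B ω} = 0) := by
  intro n
  set H := b - (a + b) / 2 with hH
  set tn := (n : ℝ) * H / μ
  have hH0 : 0 < H := by linarith
  have hvalue : ∀ d, H / 4 ≤ d → d ≤ 3 * H / 4 → ∀ᵐ ω ∂P,
      tn < exitTime (-(H / (4 * σ))) (H / (4 * σ)) 1 0 0 B ω →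
        jumpProcess a b σ μ ((a + b) / 2 + d) B tn ω = (a + b) / 2 + d + σ * B tn ω ∧
          |σ * B tn ω| < H / 4 := by
    intro d hd hd'
    filter_upwards [hB.ae_exists_large_increment hσ.ne' μ (b - a)] with ω hexit hτ
    have hconf : ∀ t ∈ Icc 0 tn, |σ * B t ω| < H / 4 := fun t ht => by
      rw [abs_mul, abs_of_pos hσ]
      calc σ * |B t ω| < σ * (H / (4 * σ)) := by
            gcongr; exact abs_lt_of_lt_exitTime (hB.start ω) (by positivity) hτ ht
        _ = H / 4 := by field_simp
    exact ⟨jumpProcess_eq_of_confined (hB.cont ω) (hB.start ω) hμ hH.symm hd hd' hconf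
      fun s _ => hexit s, hconf tn ⟨by positivity, le_rfl⟩⟩
  constructor
  · refine measure_congr (eventuallyEq_set.mpr ?_)
    filter_upwards [hvalue (H / 4) le_rfl (by linarith)] with ω hω
    refine ⟨fun h => h.2, fun hτ => ⟨?_, hτ⟩⟩
    obtain ⟨hval, hBtn⟩ := hω hτ
    rw [hval, mem_Ico]
    constructor <;> linarith [abs_lt.mp hBtn]
  · rw [measure_eq_zero_iff_ae_notMem]
    filter_upwards [hvalue (3 * H / 4) (by linarith) le_rfl] with ω hω ⟨hA, hτ⟩
    obtain ⟨hval, hBtn⟩ := hω hτ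
    rw [hval, mem_Ico] at hA
    linarith [abs_lt.mp hBtn, hA.2]
end

section
/- Let a < b, x₀ = (a+b)/2, σ > 0, μ > 0, and for x ∈ (a, x₀) let x_S = x + (b−a)/2. Let X^z denote the L^{σ,μ}-diffusion in (a,b) with jump boundary and jump distribution δ_{x₀} started at z. Then for all t > 0, sup_{x∈(a,x₀)} ‖P(X^x_t ∈ ·) − P(X^{x_S}_t ∈ ·)‖_TV ≤ sup_{x∈(a,x₀)} P(τ^x > t) ≤ e^{(b−a)μ/(2σ²)} · e^{−μ²t/(2σ²)}, where τ^x = inf{t > 0 : x + μt + σB_t ∉ (a, x₀)} is the first exit time of the drifted Brownian motion from (a, x₀). -/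
/-!
Drive the processes started at `x` and at `x + (b - a) / 2` by the same Brownian path. Until the
exit time `τ` of `x + μ t + σ B_t` from `(a, x₀)` the two paths differ by exactly `(b - a) / 2`,
so at time `τ` one of them reaches the boundary of `(a, b)` and jumps to `x₀`, where the other one
is; from then on the two processes coincide. By the coupling inequality the laws at time `t`
differ by at most `P(τ > t)`, and `{τ > t} ⊆ {σ B_t + μ t ≤ (b - a) / 2}`, whose probability the
Chernoff bound with parameter `μ / σ` estimates by the stated exponential. Almost surely
`σ B_n + μ n` is unbounded, so all exit times are finite and the jump times increase to infinity.
-/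

open MeasureTheory ProbabilityTheory Set Filter

open scoped NNReal Topology

namespace JumpBoundary

/-- `sInf ∅ = 0`: this is `0` when `p` stays in `U` after time `s`. -/
noncomputable def exitTimeAfter {α : Type*} (p : ℝ → α) (U : Set α) (s : ℝ) : ℝ :=
  sInf {u | s < u ∧ p u ∉ U}

section ExitTime

variable {α : Type*} {p : ℝ → α} {U : Set α} {s : ℝ}

theorem mem_of_lt_exitTimeAfter {u : ℝ} (hsu : s < u) (hu : u < exitTimeAfter p U s) :
    p u ∈ U := by
  by_contra h
  exact (csInf_le (⟨s, fun v hv => hv.1.le⟩ : BddBelow {v | s < v ∧ p v ∉ U}) ⟨hsu, h⟩).not_gt hu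

theorem exitTimeAfter_eq_of_forall_mem {s' : ℝ} (hss' : s ≤ s') (h : ∀ u ∈ Ioc s s', p u ∈ U) :
    exitTimeAfter p U s = exitTimeAfter p U s' := by
  unfold exitTimeAfter
  congr 1
  ext u
  exact ⟨fun hu => ⟨lt_of_not_ge fun hus => hu.2 (h u ⟨hu.1, hus⟩), hu.2⟩,
    fun hu => ⟨hss'.trans_lt hu.1, hu.2⟩⟩

variable [TopologicalSpace α]

theorem isLeast_exitTimeAfter (hp : Continuous p) (hU : IsOpen U) (hs : p s ∈ U)
    (hexit : ∃ u, s < u ∧ p u ∉ U) :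
    IsLeast {u | s < u ∧ p u ∉ U} (exitTimeAfter p U s) := by
  have hbdd : BddBelow {u | s < u ∧ p u ∉ U} := ⟨s, fun u hu => hu.1.le⟩
  have hmem : exitTimeAfter p U s ∈ Ici s ∩ p ⁻¹' Uᶜ :=
    closure_minimal (show _ ⊆ Ici s ∩ p ⁻¹' Uᶜ from fun u hu => ⟨hu.1.le, hu.2⟩)
      (isClosed_Ici.inter (hU.isClosed_compl.preimage hp)) (csInf_mem_closure hexit hbdd)
  refine ⟨⟨hmem.1.lt_of_ne fun h => hmem.2 (h ▸ hs), hmem.2⟩, fun u hu => csInf_le hbdd hu⟩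

theorem exitTimeAfter_mem_frontier (hp : Continuous p) (hU : IsOpen U) (hs : p s ∈ U)
    (hexit : ∃ u, s < u ∧ p u ∉ U) :
    p (exitTimeAfter p U s) ∈ frontier U := by
  have hT := isLeast_exitTimeAfter hp hU hs hexit
  rw [hU.frontier_eq]
  refine ⟨mem_closure_of_tendsto (b := 𝓝[<] exitTimeAfter p U s)
    (hp.tendsto _ |>.mono_left nhdsWithin_le_nhds) ?_, hT.1.2⟩
  filter_upwards [Ioo_mem_nhdsLT hT.1.1] with u hu using mem_of_lt_exitTimeAfter hu.1 hu.2

end ExitTime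

section Measurability

variable {Ω α : Type*} [MeasurableSpace Ω] [PseudoMetricSpace α] [MeasurableSpace α]
  [OpensMeasurableSpace α] {F : Ω → ℝ → α} {U : Set α} {q : Ω → ℝ}

theorem measurableSet_exists_exit_le (hF : ∀ ω, Continuous (F ω))
    (hFm : ∀ u, Measurable fun ω => F ω u) (hU : IsOpen U) (hUc : Uᶜ.Nonempty)
    (hq : Measurable q) (hstart : ∀ ω, F ω (q ω) ∈ U) {β : Ω → ℝ} (hβ : Measurable β) :
    MeasurableSet {ω | ∃ u, q ω < u ∧ u ≤ β ω ∧ F ω u ∉ U} := by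
  set d : Ω → ℝ → ℝ := fun ω u => Metric.infDist (F ω u) Uᶜ
  have hd : ∀ ω, Continuous (d ω) := fun ω => (Metric.continuous_infDist_pt _).comp (hF ω)
  have hd_zero : ∀ ω u, d ω u = 0 ↔ F ω u ∉ U := fun ω u =>
    (hU.isClosed_compl.mem_iff_infDist_zero hUc).symm
  have hd_pos : ∀ ω u, F ω u ∈ U → 0 < d ω u := fun ω u hu =>
    (hU.isClosed_compl.notMem_iff_infDist_pos hUc).1 (notMem_compl_iff.2 hu)
  -- The exit set is closed and misses `q ω`, so it meets `(q ω, β ω]` iff the path comes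
  -- arbitrarily close to `Uᶜ` at rational times of `(q ω, β ω)`.
  have hrat : {ω | ∃ u, q ω < u ∧ u ≤ β ω ∧ F ω u ∉ U} =
      ⋂ k : ℕ, ⋃ r : ℚ, {ω | q ω < r ∧ (r : ℝ) < β ω ∧ d ω r < 1 / (k + 1)} := by
    ext ω
    simp only [mem_ofPred_eq, mem_iInter, mem_iUnion]
    constructor
    · rintro ⟨u, hqu, huβ, hu⟩ k
      have hev : Ioo (q ω) u ∩ {v | d ω v < 1 / (k + 1)} ∈ 𝓝[<] u :=
        inter_mem (Ioo_mem_nhdsLT hqu) <| nhdsWithin_le_nhds <|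
          (hd ω).continuousAt.eventually_lt continuousAt_const
            (by rw [(hd_zero ω u).2 hu]; positivity)
      obtain ⟨l, hlu, hl⟩ := mem_nhdsLT_iff_exists_Ioo_subset.1 hev
      obtain ⟨r, hlr, hru⟩ := exists_rat_btwn (mem_Iio.1 hlu)
      exact ⟨r, (hl ⟨hlr, hru⟩).1.1, hru.trans_le huβ, (hl ⟨hlr, hru⟩).2⟩
    · intro h
      by_contra! hno
      have hpos : ∀ u ∈ Icc (q ω) (β ω), 0 < d ω u := fun u hu => hd_pos ω u <|
        hu.1.eq_or_lt.elim (fun h => h ▸ hstart ω) fun h => hno u h hu.2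
      obtain ⟨r₀, hr₀⟩ := h 0
      obtain ⟨u₀, hu₀, hmin⟩ := isCompact_Icc.exists_isMinOn
        (nonempty_Icc.2 (hr₀.1.le.trans hr₀.2.1.le)) (hd ω).continuousOn
      obtain ⟨k, hk⟩ := exists_nat_one_div_lt (hpos u₀ hu₀)
      obtain ⟨r, hqr, hrβ, hr⟩ := h k
      exact (hmin ⟨hqr.le, hrβ.le⟩).not_gt (hr.trans hk)
  rw [hrat]
  refine .iInter fun k => .iUnion fun r => ?_
  exact (measurableSet_lt hq measurable_const).inter <|
    (measurableSet_lt measurable_const hβ).inter <|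
      measurableSet_lt ((Metric.continuous_infDist_pt _).measurable.comp (hFm r)) measurable_const

theorem measurable_exitTimeAfter (hF : ∀ ω, Continuous (F ω))
    (hFm : ∀ u, Measurable fun ω => F ω u) (hU : IsOpen U) (hUc : Uᶜ.Nonempty)
    (hq : Measurable q) (hstart : ∀ ω, F ω (q ω) ∈ U) :
    Measurable fun ω => exitTimeAfter (F ω) U (q ω) := by
  have hE := fun β (hβ : Measurable β) =>
    measurableSet_exists_exit_le hF hFm hU hUc hq hstart hβ
  have hexit : MeasurableSet {ω | ∃ u, q ω < u ∧ F ω u ∉ U} := by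
    have : {ω | ∃ u, q ω < u ∧ F ω u ∉ U} =
        ⋃ m : ℕ, {ω | ∃ u, q ω < u ∧ u ≤ q ω + m ∧ F ω u ∉ U} := by
      ext ω
      simp only [mem_ofPred_eq, mem_iUnion]
      constructor
      · rintro ⟨u, hqu, hu⟩
        obtain ⟨m, hm⟩ := exists_nat_ge (u - q ω)
        exact ⟨m, u, hqu, by linarith, hu⟩
      · rintro ⟨m, u, hqu, -, hu⟩
        exact ⟨u, hqu, hu⟩
    rw [this]
    exact .iUnion fun m => hE _ (hq.add_const _)
  refine measurable_of_Iic fun c => ?_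
  have hpre : (fun ω => exitTimeAfter (F ω) U (q ω)) ⁻¹' Iic c =
      {ω | ∃ u, q ω < u ∧ u ≤ c ∧ F ω u ∉ U} ∪
        ({ω | ∃ u, q ω < u ∧ F ω u ∉ U}ᶜ ∩ {_ω | 0 ≤ c}) := by
    ext ω
    by_cases hω : ∃ u, q ω < u ∧ F ω u ∉ U
    · have hT := isLeast_exitTimeAfter (hF ω) hU (hstart ω) hω
      simp only [mem_preimage, mem_Iic, mem_union, mem_ofPred_eq, mem_inter_iff, mem_compl_iff,
        hω, not_true_eq_false, false_and, or_false]
      exact ⟨fun h => ⟨_, hT.1.1, h, hT.1.2⟩, fun ⟨u, hqu, huc, hu⟩ => (hT.2 ⟨hqu, hu⟩).trans huc⟩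
    · have hempty : {u | q ω < u ∧ F ω u ∉ U} = ∅ :=
        eq_empty_of_forall_notMem fun u hu => hω ⟨u, hu⟩
      simp only [mem_preimage, mem_Iic, exitTimeAfter, hempty, Real.sInf_empty, mem_union,
        mem_ofPred_eq, mem_inter_iff, mem_compl_iff, hω, not_false_eq_true, true_and]
      exact ⟨Or.inr, fun h => h.elim (fun ⟨u, hqu, _, hu⟩ => (hω ⟨u, hqu, hu⟩).elim) id⟩
  rw [hpre]
  exact (hE _ measurable_const).union (hexit.compl.inter (.const _))

end Measurability

theorem exists_lt_le_of_not_bddAbove {w : ℝ → ℝ} (hw : Continuous w)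
    (hunb : ¬BddAbove (range fun n : ℕ => w n)) (s β : ℝ) : ∃ u, s < u ∧ β ≤ w u := by
  obtain ⟨K, hK⟩ := (isCompact_Icc (a := 0) (b := |s|).image hw).bddAbove
  obtain ⟨_, ⟨n, rfl⟩, hn⟩ := not_bddAbove_iff.1 hunb (max K β)
  refine ⟨n, lt_of_not_ge fun hns => ?_, (le_max_right _ _).trans hn.le⟩
  exact (hK (mem_image_of_mem w ⟨n.cast_nonneg, hns.trans (le_abs_self s)⟩)).not_gt
    ((le_max_left _ _).trans_lt hn)

section Paths

variable {Ω : Type} {a b σ μ : ℝ} {B : ℝ → Ω → ℝ} {ω : Ω}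

/-- The path followed by the diffusion after a jump to `(a + b) / 2` at time `s`. -/
noncomputable def restartPath (a b σ μ : ℝ) (B : ℝ → Ω → ℝ) (ω : Ω) (s u : ℝ) : ℝ :=
  (a + b) / 2 + σ * (B u ω - B s ω) + μ * (u - s)

theorem jumpTimes_zero (x : ℝ) :
    jumpTimes a b σ μ x B ω 0 =
      exitTimeAfter (fun u => x + σ * B u ω + μ * u) (Ioo a b) 0 := rfl

theorem jumpTimes_succ (x : ℝ) (n : ℕ) :
    jumpTimes a b σ μ x B ω (n + 1) =
      exitTimeAfter (restartPath a b σ μ B ω (jumpTimes a b σ μ x B ω n)) (Ioo a b)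
        (jumpTimes a b σ μ x B ω n) := rfl

theorem restartPath_self (s : ℝ) : restartPath a b σ μ B ω s s = (a + b) / 2 := by
  simp [restartPath]

theorem add_div_two_mem_Ioo (hab : a < b) : (a + b) / 2 ∈ Ioo a b :=
  ⟨left_lt_add_div_two.2 hab, add_div_two_lt_right.2 hab⟩

theorem continuous_restartPath (hcont : Continuous fun u => B u ω) (s : ℝ) :
    Continuous (restartPath a b σ μ B ω s) := by
  unfold restartPath; fun_prop

variable (hcont : Continuous fun u => B u ω)
  (hunb : ¬BddAbove (range fun n : ℕ => σ * B n ω + μ * n))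
include hcont hunb

theorem exists_exit_Ioo {p : ℝ → ℝ} (c : ℝ) (hp : ∀ u, p u = c + (σ * B u ω + μ * u)) (s : ℝ) :
    ∃ u, s < u ∧ p u ∉ Ioo a b := by
  obtain ⟨u, hsu, hu⟩ :=
    exists_lt_le_of_not_bddAbove (w := fun u => σ * B u ω + μ * u) (by fun_prop) hunb s (b - c)
  exact ⟨u, hsu, fun h => by linarith [h.2, hp u]⟩

theorem exists_restartPath_notMem (s t : ℝ) :
    ∃ u, t < u ∧ restartPath a b σ μ B ω s u ∉ Ioo a b :=
  exists_exit_Ioo hcont hunb ((a + b) / 2 - (σ * B s ω + μ * s))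
    (fun u => by unfold restartPath; ring) t

theorem isLeast_jumpTimes_succ (hab : a < b) (x : ℝ) (n : ℕ) :
    IsLeast {u | jumpTimes a b σ μ x B ω n < u ∧
        restartPath a b σ μ B ω (jumpTimes a b σ μ x B ω n) u ∉ Ioo a b}
      (jumpTimes a b σ μ x B ω (n + 1)) := by
  rw [jumpTimes_succ]
  exact isLeast_exitTimeAfter (continuous_restartPath hcont _) isOpen_Ioo
    (restartPath_self _ ▸ add_div_two_mem_Ioo hab) (exists_restartPath_notMem hcont hunb _ _)

theorem restartPath_jumpTimes_succ_mem (hab : a < b) (x : ℝ) (n : ℕ) :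
    restartPath a b σ μ B ω (jumpTimes a b σ μ x B ω n) (jumpTimes a b σ μ x B ω (n + 1)) ∈
      ({a, b} : Set ℝ) := by
  rw [← frontier_Ioo hab, jumpTimes_succ]
  exact exitTimeAfter_mem_frontier (continuous_restartPath hcont _) isOpen_Ioo
    (restartPath_self _ ▸ add_div_two_mem_Ioo hab) (exists_restartPath_notMem hcont hunb _ _)

theorem strictMono_jumpTimes (hab : a < b) (x : ℝ) : StrictMono (jumpTimes a b σ μ x B ω) :=
  strictMono_nat_of_lt_succ fun n => (isLeast_jumpTimes_succ hcont hunb hab x n).1.1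

theorem tendsto_jumpTimes_atTop (hab : a < b) (x : ℝ) :
    Tendsto (jumpTimes a b σ μ x B ω) atTop atTop := by
  have hmono := (strictMono_jumpTimes hcont hunb hab x).monotone
  refine tendsto_atTop_atTop_of_monotone' hmono fun hbdd => ?_
  set T := jumpTimes a b σ μ x B ω
  set W : ℝ → ℝ := fun u => σ * B u ω + μ * u
  have hW : Tendsto (fun n => W (T n)) atTop (𝓝 (W (⨆ n, T n))) :=
    ((by fun_prop : Continuous W).tendsto _).comp (tendsto_atTop_ciSup hmono hbdd)
  have hjump : Tendsto (fun n => |W (T (n + 1)) - W (T n)|) atTop (𝓝 0) := by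
    simpa using ((hW.comp (tendsto_add_atTop_nat 1)).sub hW).abs
  -- each jump moves the drifted path by half the length of the interval
  have hstep : ∀ n, (b - a) / 2 ≤ |W (T (n + 1)) - W (T n)| := fun n => by
    have h := restartPath_jumpTimes_succ_mem hcont hunb hab x n
    have hdiff : W (T (n + 1)) - W (T n) =
        restartPath a b σ μ B ω (T n) (T (n + 1)) - (a + b) / 2 := by
      simp only [W, restartPath]; ring
    rcases h with h | h <;> rw [hdiff, h]
    · rw [abs_of_neg (by linarith)]; linarith
    · rw [abs_of_pos (by linarith)]; linarith
  linarith [ge_of_tendsto' hjump hstep]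

end Paths

section Coupling

variable {Ω : Type} {a b σ μ : ℝ} {B : ℝ → Ω → ℝ} {ω : Ω} {x t : ℝ}

theorem jumpProcess_eq_of_lt_jumpTimes_zero (hmono : Monotone (jumpTimes a b σ μ x B ω))
    (ht : t < jumpTimes a b σ μ x B ω 0) :
    jumpProcess a b σ μ x B t ω = x + σ * B t ω + μ * t := by
  have hnone : ∀ i, ¬(jumpTimes a b σ μ x B ω i ≤ t ∧ t < jumpTimes a b σ μ x B ω (i + 1)) :=
    fun i h => (h.1.trans_lt ht).not_ge (hmono (Nat.zero_le i))
  simp [jumpProcess, ht, hnone]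

theorem jumpProcess_eq_of_mem_Ico (hmono : Monotone (jumpTimes a b σ μ x B ω)) {n : ℕ}
    (ht : t ∈ Ico (jumpTimes a b σ μ x B ω n) (jumpTimes a b σ μ x B ω (n + 1))) :
    jumpProcess a b σ μ x B t ω = restartPath a b σ μ B ω (jumpTimes a b σ μ x B ω n) t := by
  have h0 : ¬t < jumpTimes a b σ μ x B ω 0 := ((hmono (Nat.zero_le n)).trans ht.1).not_gt
  rw [jumpProcess, if_neg h0, zero_add, tsum_eq_single n, if_pos (show _ ∧ _ from ht),
    restartPath]
  intro i hin
  refine if_neg fun hi => ?_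
  rcases lt_or_gt_of_ne hin with hlt | hgt
  · exact ((hmono (Nat.succ_le_of_lt hlt)).trans ht.1).not_gt hi.2
  · exact ((hmono (Nat.succ_le_of_lt hgt)).trans hi.1).not_gt ht.2

variable (hcont : Continuous fun u => B u ω)
  (hunb : ¬BddAbove (range fun n : ℕ => σ * B n ω + μ * n))
include hcont hunb

/-- The process from `z` jumps at time `τ` onto the path from `y`, so from then on the jump
times of `z` are those of `y` shifted by one. -/
theorem jumpProcess_eq_of_restart (hab : a < b) {y z τ : ℝ} (hτ : 0 < τ) (hτt : τ ≤ t)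
    (hzτ : z + σ * B τ ω + μ * τ ∉ Ioo a b)
    (hz : ∀ u ∈ Ioo 0 τ, z + σ * B u ω + μ * u ∈ Ioo a b)
    (hy : ∀ u ∈ Ioo 0 τ, y + σ * B u ω + μ * u ∈ Ioo a b)
    (hrestart : ∀ u, y + σ * B u ω + μ * u = restartPath a b σ μ B ω τ u) :
    jumpProcess a b σ μ y B t ω = jumpProcess a b σ μ z B t ω := by
  have hz0 : jumpTimes a b σ μ z B ω 0 = τ :=
    IsLeast.csInf_eq ⟨⟨hτ, hzτ⟩, fun u hu => le_of_not_gt fun huτ => hu.2 (hz u ⟨hu.1, huτ⟩)⟩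
  have hshift : ∀ n, jumpTimes a b σ μ y B ω n = jumpTimes a b σ μ z B ω (n + 1) := by
    intro n
    induction n with
    | zero =>
      rw [jumpTimes_zero, jumpTimes_succ, hz0, show (fun u => y + σ * B u ω + μ * u) =
        restartPath a b σ μ B ω τ from funext hrestart]
      refine exitTimeAfter_eq_of_forall_mem hτ.le fun u hu => ?_
      rcases hu.2.lt_or_eq with hlt | rfl
      · exact hrestart u ▸ hy u ⟨hu.1, hlt⟩
      · exact (restartPath_self u).symm ▸ add_div_two_mem_Ioo hab
    | succ n ih => rw [jumpTimes_succ, jumpTimes_succ, ih]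
  have hmono_y := (strictMono_jumpTimes hcont hunb hab y).monotone
  have hmono_z := (strictMono_jumpTimes hcont hunb hab z).monotone
  obtain ⟨N, hN⟩ := ((tendsto_jumpTimes_atTop hcont hunb hab y).eventually_gt_atTop t).exists
  rcases lt_or_ge t (jumpTimes a b σ μ y B ω 0) with ht0 | ht0
  · rw [jumpProcess_eq_of_lt_jumpTimes_zero hmono_y ht0, hrestart,
      jumpProcess_eq_of_mem_Ico hmono_z (n := 0) ⟨hz0 ▸ hτt, hshift 0 ▸ ht0⟩, hz0]
  · obtain ⟨n, -, hn⟩ := mem_iUnion₂.1 (Ico_subset_biUnion_Ico N _ ⟨ht0, hN⟩)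
    rw [jumpProcess_eq_of_mem_Ico hmono_y hn,
      jumpProcess_eq_of_mem_Ico hmono_z (n := n + 1) (by rwa [← hshift, ← hshift]), hshift]

theorem jumpProcess_eq_shift_of_exitTime_le (h0 : B 0 ω = 0) (hab : a < b)
    (hx : x ∈ Ioo a ((a + b) / 2)) (ht : exitTime a ((a + b) / 2) σ μ x B ω ≤ t) :
    jumpProcess a b σ μ x B t ω = jumpProcess a b σ μ (x + (b - a) / 2) B t ω := by
  have hp : Continuous fun u => x + σ * B u ω + μ * u := by fun_prop
  have hp0 : x + σ * B 0 ω + μ * 0 ∈ Ioo a ((a + b) / 2) := by simpa [h0] using hx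
  have hexit :=
    exists_exit_Ioo (a := a) (b := (a + b) / 2) hcont hunb x (fun u => add_assoc _ _ _) 0
  have hτ : 0 < exitTime a ((a + b) / 2) σ μ x B ω :=
    (isLeast_exitTimeAfter hp isOpen_Ioo hp0 hexit).1.1
  have hτ_mem : x + σ * B (exitTime a ((a + b) / 2) σ μ x B ω) ω +
      μ * exitTime a ((a + b) / 2) σ μ x B ω ∈ ({a, (a + b) / 2} : Set ℝ) := by
    rw [← frontier_Ioo (by linarith)]
    exact exitTimeAfter_mem_frontier hp isOpen_Ioo hp0 hexit
  have hbefore : ∀ u ∈ Ioo 0 (exitTime a ((a + b) / 2) σ μ x B ω),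
      x + σ * B u ω + μ * u ∈ Ioo a ((a + b) / 2) :=
    fun u hu => mem_of_lt_exitTimeAfter (p := fun u => x + σ * B u ω + μ * u) hu.1 hu.2
  generalize exitTime a ((a + b) / 2) σ μ x B ω = τ at hτ hτ_mem hbefore ht
  -- Up to time `τ` the two paths lie in opposite halves of `(a, b)`; at time `τ` one of them
  -- is at the boundary of `(a, b)` and the other at its midpoint.
  simp only [mem_insert_iff, mem_singleton_iff] at hτ_mem
  rcases hτ_mem with hτa | hτmid
  · refine (jumpProcess_eq_of_restart hcont hunb hab hτ ht ?_ ?_ ?_ ?_).symm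
    · exact fun h => h.1.ne' hτa
    · exact fun u hu => ⟨(hbefore u hu).1, (hbefore u hu).2.trans (by linarith)⟩
    · exact fun u hu => ⟨by linarith [(hbefore u hu).1], by linarith [(hbefore u hu).2]⟩
    · intro u
      unfold restartPath
      linear_combination hτa
  · refine jumpProcess_eq_of_restart hcont hunb hab hτ ht ?_ ?_ ?_ ?_
    · exact fun h => h.2.ne (by linarith)
    · exact fun u hu => ⟨by linarith [(hbefore u hu).1], by linarith [(hbefore u hu).2]⟩
    · exact fun u hu => ⟨(hbefore u hu).1, (hbefore u hu).2.trans (by linarith)⟩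
    · intro u
      unfold restartPath
      linear_combination hτmid

end Coupling

section JumpMeasurability

variable {Ω : Type} [MeasurableSpace Ω] {a b σ μ x : ℝ} {B : ℝ → Ω → ℝ}
  (hBm : ∀ u, Measurable (B u)) (hcont : ∀ ω, Continuous fun u => B u ω)
include hBm hcont

theorem measurable_jumpTimes (h0 : ∀ ω, B 0 ω = 0) (hab : a < b) (hx : x ∈ Ioo a b) (n : ℕ) :
    Measurable fun ω => jumpTimes a b σ μ x B ω n := by
  have hUc : (Ioo a b)ᶜ.Nonempty := ⟨a, fun h => h.1.false⟩
  induction n with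
  | zero =>
    simp only [jumpTimes_zero]
    exact measurable_exitTimeAfter (fun ω => by fun_prop) (fun u => by fun_prop) isOpen_Ioo hUc
      measurable_const fun ω => by simpa [h0 ω] using hx
  | succ n ih =>
    have hBT : Measurable fun ω => B (jumpTimes a b σ μ x B ω n) ω :=
      (measurable_uncurry_of_continuous_of_measurable hcont hBm).comp (ih.prodMk measurable_id)
    simp only [jumpTimes_succ]
    exact measurable_exitTimeAfter (fun ω => continuous_restartPath (hcont ω) _)
      (fun u => ((hBm u).sub hBT).const_mul σ |>.const_add _ |>.add
        ((ih.const_sub u).const_mul μ)) isOpen_Ioo hUc ih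
      fun ω => restartPath_self _ ▸ add_div_two_mem_Ioo hab

theorem measurable_jumpProcess (h0 : ∀ ω, B 0 ω = 0) (hab : a < b) (hx : x ∈ Ioo a b) (t : ℝ) :
    Measurable (jumpProcess a b σ μ x B t) := by
  have hT := measurable_jumpTimes hBm hcont h0 hab hx (σ := σ) (μ := μ)
  have hBT : ∀ n, Measurable fun ω => B (jumpTimes a b σ μ x B ω n) ω := fun n =>
    (measurable_uncurry_of_continuous_of_measurable hcont hBm).comp ((hT n).prodMk measurable_id)
  refine Measurable.add ?_ (Measurable.tsum fun i => ?_)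
  · exact Measurable.ite (measurableSet_lt measurable_const (hT 0)) (by fun_prop) measurable_const
  · refine Measurable.ite ((measurableSet_le (hT i) measurable_const).inter
      (measurableSet_lt measurable_const (hT (i + 1)))) ?_ measurable_const
    exact ((hBm t).sub (hBT i)).const_mul σ |>.const_add _ |>.add
      (((hT i).const_sub t).const_mul μ)

end JumpMeasurability

section Probability

variable {Ω : Type*} [MeasurableSpace Ω] {P : Measure Ω}

theorem tvDist_map_le_of_ae [IsFiniteMeasure P] {f g : Ω → ℝ} (hf : Measurable f)
    (hg : Measurable g) {A : Set Ω} (hA : ∀ᵐ ω ∂P, f ω ≠ g ω → ω ∈ A) :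
    tvDist (P.map f) (P.map g) ≤ P.real A := by
  have key : ∀ {f g : Ω → ℝ}, (∀ᵐ ω ∂P, f ω ≠ g ω → ω ∈ A) →
      ∀ s, (P (f ⁻¹' s)).toReal ≤ (P (g ⁻¹' s)).toReal + P.real A := fun {f g} h s =>
    (ENNReal.toReal_mono (measure_ne_top _ _) <| measure_mono_ae <| h.mono fun ω hω hfs => by
      by_cases hfg : f ω = g ω
      · exact Or.inl (show g ω ∈ s from hfg ▸ hfs)
      · exact Or.inr (hω hfg)).trans (measureReal_union_le _ _)
  have : Nonempty {s : Set ℝ // MeasurableSet s} := ⟨⟨∅, .empty⟩⟩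
  refine ciSup_le fun s => ?_
  rw [Measure.map_apply hf s.2, Measure.map_apply hg s.2, abs_sub_le_iff]
  exact ⟨by linarith [key hA s.1], by linarith [key (hA.mono fun ω h hne => h (Ne.symm hne)) s.1]⟩

theorem gaussianReal_real_Iic_le (v : ℝ≥0) (c : ℝ) {θ : ℝ} (hθ : 0 ≤ θ) :
    (gaussianReal 0 v).real (Iic c) ≤ Real.exp (θ * c + v * θ ^ 2 / 2) := by
  have h := measure_le_le_exp_mul_mgf (X := id) (μ := gaussianReal 0 v) c (neg_nonpos.2 hθ)
    (integrable_exp_mul_gaussianReal _)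
  rw [mgf_id_gaussianReal, ← Real.exp_add] at h
  convert h using 2
  · rfl
  · ring

end Probability

section BrownianMotion

variable {Ω : Type} [MeasurableSpace Ω] {P : Measure Ω} {B : ℝ → Ω → ℝ} {σ μ : ℝ}

/-- Chernoff bound with parameter `μ / σ`. -/
theorem measureReal_drift_le (hB : IsStandardBM P B) (hσ : 0 < σ) (hμ : 0 ≤ μ) {s : ℝ}
    (hs : 0 ≤ s) (m : ℝ) :
    P.real {ω | σ * B s ω + μ * s ≤ m} ≤ Real.exp (μ * m / σ ^ 2 - μ ^ 2 * s / (2 * σ ^ 2)) := by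
  have hlaw : P.map (B s) = gaussianReal 0 s.toNNReal := by
    simpa [hB.start] using hB.gauss 0 s le_rfl hs
  have hset : {ω | σ * B s ω + μ * s ≤ m} = B s ⁻¹' Iic ((m - μ * s) / σ) := by
    ext ω
    simp only [mem_ofPred_eq, mem_preimage, mem_Iic, le_div_iff₀ hσ]
    constructor <;> intro h <;> linarith
  rw [hset, ← map_measureReal_apply (hB.meas s) measurableSet_Iic, hlaw]
  refine (gaussianReal_real_Iic_le _ _ (div_nonneg hμ hσ.le)).trans_eq ?_
  rw [Real.coe_toNNReal _ hs]
  congr 1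
  field_simp
  ring

theorem measure_bddAbove_drift_eq_zero (hB : IsStandardBM P B) (hσ : 0 < σ) (hμ : 0 < μ) :
    P {ω | BddAbove (range fun n : ℕ => σ * B n ω + μ * n)} = 0 := by
  have := hB.isProb
  have hM : ∀ M : ℕ, P {ω | ∀ n : ℕ, σ * B n ω + μ * n ≤ M} = 0 := by
    intro M
    have hlim : Tendsto (fun n : ℕ => Real.exp (μ * M / σ ^ 2 - μ ^ 2 * n / (2 * σ ^ 2)))
        atTop (𝓝 0) := by
      refine Real.tendsto_exp_atBot.comp ?_
      simp_rw [sub_eq_add_neg]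
      refine tendsto_atBot_add_const_left _ _ (tendsto_neg_atTop_atBot.comp ?_)
      exact (tendsto_natCast_atTop_atTop.const_mul_atTop (by positivity)).atTop_div_const
        (by positivity)
    rw [← measureReal_eq_zero_iff]
    refine le_antisymm (ge_of_tendsto' hlim fun n => ?_) measureReal_nonneg
    have hsub : {ω | ∀ k : ℕ, σ * B k ω + μ * k ≤ M} ⊆ {ω | σ * B n ω + μ * n ≤ M} :=
      fun ω hω => hω n
    exact (measureReal_mono hsub).trans (measureReal_drift_le hB hσ hμ.le n.cast_nonneg M)
  refine measure_mono_null (fun ω ⟨K, hK⟩ => ?_) (measure_iUnion_null hM)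
  obtain ⟨M, hM⟩ := exists_nat_ge K
  exact mem_iUnion.2 ⟨M, fun n => (hK ⟨n, rfl⟩).trans hM⟩

theorem measureReal_lt_exitTime_le (hB : IsStandardBM P B) (hσ : 0 < σ) (hμ : 0 ≤ μ)
    {a c x t : ℝ} (hx : a < x) (ht : 0 < t) :
    P.real {ω | t < exitTime a c σ μ x B ω} ≤
      Real.exp (μ * (c - a) / σ ^ 2 - μ ^ 2 * t / (2 * σ ^ 2)) := by
  have := hB.isProb
  refine (measureReal_mono fun ω hω => ?_).trans (measureReal_drift_le hB hσ hμ ht.le (c - a))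
  have h := mem_of_lt_exitTimeAfter (p := fun u => x + σ * B u ω + μ * u) ht hω
  show σ * B t ω + μ * t ≤ c - a
  linarith [h.2]

theorem tvDist_jumpProcess_shift_le (hB : IsStandardBM P B) {a b : ℝ} (hab : a < b)
    (hσ : 0 < σ) (hμ : 0 < μ) {x : ℝ} (hx : x ∈ Ioo a ((a + b) / 2)) (t : ℝ) :
    tvDist (P.map (jumpProcess a b σ μ x B t))
        (P.map (jumpProcess a b σ μ (x + (b - a) / 2) B t)) ≤
      P.real {ω | t < exitTime a ((a + b) / 2) σ μ x B ω} := by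
  have := hB.isProb
  have hgood : ∀ᵐ ω ∂P, ¬BddAbove (range fun n : ℕ => σ * B n ω + μ * n) :=
    measure_eq_zero_iff_ae_notMem.1 (measure_bddAbove_drift_eq_zero hB hσ hμ)
  refine tvDist_map_le_of_ae
    (measurable_jumpProcess hB.meas hB.cont hB.start hab ⟨hx.1, by linarith [hx.2]⟩ t)
    (measurable_jumpProcess hB.meas hB.cont hB.start hab
      ⟨by linarith [hx.1], by linarith [hx.2]⟩ t) ?_
  filter_upwards [hgood] with ω hω hne
  exact lt_of_not_ge fun hτ =>
    hne (jumpProcess_eq_shift_of_exitTime_le (hB.cont ω) hω (hB.start ω) hab hx hτ)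

end BrownianMotion

end JumpBoundary

open JumpBoundary

/-- For `x ∈ (a,x₀)` and its shift `x_S = x + (b-a)/2`, the laws of the
jump-boundary diffusions started at `x` and `x_S` satisfy
`sup_x ‖P(X^x_t ∈ ·) - P(X^{x_S}_t ∈ ·)‖_TV ≤ sup_x P(τ^x > t)
  ≤ e^{(b-a)μ/(2σ²)} e^{-μ²t/(2σ²)}`,
where `τ^x` is the exit time of the drifted Brownian motion from `(a, x₀)`. -/
theorem shifted_coupling_tv_bound {Ω : Type} [MeasurableSpace Ω] (P : Measure Ω)
    (B : ℝ → Ω → ℝ) (hB : IsStandardBM P B) (a b σ μ : ℝ) (hab : a < b)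
    (hσ : 0 < σ) (hμ : 0 < μ) :
    ∀ t : ℝ, 0 < t →
      (⨆ x : Set.Ioo a ((a + b) / 2),
          tvDist (P.map (jumpProcess a b σ μ (x : ℝ) B t))
            (P.map (jumpProcess a b σ μ ((x : ℝ) + (b - a) / 2) B t))) ≤
        (⨆ x : Set.Ioo a ((a + b) / 2),
          (P {ω | t < exitTime a ((a + b) / 2) σ μ (x : ℝ) B ω}).toReal) ∧
      (⨆ x : Set.Ioo a ((a + b) / 2),
          (P {ω | t < exitTime a ((a + b) / 2) σ μ (x : ℝ) B ω}).toReal) ≤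
        Real.exp ((b - a) * μ / (2 * σ ^ 2)) * Real.exp (-(μ ^ 2 * t) / (2 * σ ^ 2)) := by
  intro t ht
  have : Nonempty (Ioo a ((a + b) / 2)) := (nonempty_Ioo.2 (by linarith)).to_subtype
  have htail : ∀ x : Ioo a ((a + b) / 2),
      P.real {ω | t < exitTime a ((a + b) / 2) σ μ x B ω} ≤
        Real.exp ((b - a) * μ / (2 * σ ^ 2)) * Real.exp (-(μ ^ 2 * t) / (2 * σ ^ 2)) := fun x =>
    (measureReal_lt_exitTime_le hB hσ hμ.le x.2.1 ht).trans_eq (by rw [← Real.exp_add]; ring_nf)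
  have hbdd : BddAbove (range fun x : Ioo a ((a + b) / 2) =>
      P.real {ω | t < exitTime a ((a + b) / 2) σ μ x B ω}) := ⟨_, forall_mem_range.2 htail⟩
  exact ⟨ciSup_le fun x => (tvDist_jumpProcess_shift_le hB hab hσ hμ x.2 t).trans
    (le_ciSup hbdd x), ciSup_le htail⟩
end
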